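/- arXiv:2205.12057 — 2 statements merged into one kernel-verified Lean document; each statement's English description precedes it below -/
import Mathlib

section
/- Let a² > 2 and φ_max = arccos((-1 - √(1 + 2a⁴))/(2a²)). Then Φ(φ_max) > 0 and Φ(2π - φ_max) < 0, where Φ(φ) = -sin φ - (a²/4) sin 2φ. -/
/-!
Since `sin 2φ = 2 sin φ cos φ`, `Φ φ = -sin φ · (1 + (a²/2) cos φ)`. At `φ_max` we have
`cos φ_max = λ₂ ∈ (-1, 0)`, so `sin φ_max > 0`, and `1 + (a²/2) λ₂ = (3 - √(1 + 2a⁴))/4 < 0`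
exactly because `a⁴ > 4`; hence `Φ φ_max > 0`. Finally `Φ` is odd and `2π`-periodic, so
`Φ (2π - φ_max) = -Φ φ_max`.
-/

open Real

/-- The root `λ₂` of `c λ² + λ - c/2 = 0` (with `c = a²`), where `Φ' = -cos φ - (c/2) cos 2φ`
vanishes. -/
noncomputable def criticalCos (c : ℝ) : ℝ := (-1 - √(1 + 2 * c ^ 2)) / (2 * c)

section criticalCos

variable {c : ℝ}

lemma three_lt_sqrt_one_add_two_mul_sq (hc : 2 < c) : 3 < √(1 + 2 * c ^ 2) :=
  (lt_sqrt (by norm_num)).2 (by nlinarith)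

lemma sqrt_one_add_two_mul_sq_lt (hc : 2 < c) : √(1 + 2 * c ^ 2) < 2 * c - 1 :=
  (sqrt_lt' (by linarith)).2 (by nlinarith)

lemma neg_one_lt_criticalCos (hc : 2 < c) : -1 < criticalCos c := by
  rw [criticalCos, lt_div_iff₀ (by linarith)]
  linarith [sqrt_one_add_two_mul_sq_lt hc]

lemma criticalCos_neg (hc : 0 < c) : criticalCos c < 0 :=
  div_neg_of_neg_of_pos (by linarith [sqrt_nonneg (1 + 2 * c ^ 2)]) (by linarith)

lemma one_add_mul_criticalCos_neg (hc : 2 < c) : 1 + c / 2 * criticalCos c < 0 := by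
  have h : c / 2 * criticalCos c = (-1 - √(1 + 2 * c ^ 2)) / 4 := by
    rw [criticalCos]
    field_simp
    ring
  rw [h]
  linarith [three_lt_sqrt_one_add_two_mul_sq hc]

end criticalCos

lemma neg_sin_sub_mul_sin_two_mul_eq (c x : ℝ) :
    -sin x - c / 4 * sin (2 * x) = -sin x * (1 + c / 2 * cos x) := by
  rw [sin_two_mul]
  ring

lemma neg_sin_sub_mul_sin_two_mul_two_pi_sub (c x : ℝ) :
    -sin (2 * π - x) - c / 4 * sin (2 * (2 * π - x)) = -(-sin x - c / 4 * sin (2 * x)) := by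
  rw [show 2 * (2 * π - x) = 2 * π - 2 * x + 2 * π by ring, sin_add_two_pi, sin_two_pi_sub,
    sin_two_pi_sub]
  ring

theorem Phi_sign_at_critical (a : ℝ) (ha : 2 < a^2)
    (Φ : ℝ → ℝ) (hΦ : ∀ φ, Φ φ = -Real.sin φ - (a^2/4) * Real.sin (2*φ))
    (φmax : ℝ) (hmax : φmax = Real.arccos ((-1 - Real.sqrt (1 + 2*a^4)) / (2*a^2))) :
    0 < Φ φmax ∧ Φ (2*π - φmax) < 0 := by
  rw [show a ^ 4 = (a ^ 2) ^ 2 by ring] at hmax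
  change φmax = arccos (criticalCos (a ^ 2)) at hmax
  have hlow := neg_one_lt_criticalCos ha
  have hhigh := criticalCos_neg (by linarith : 0 < a ^ 2)
  have hcos : cos φmax = criticalCos (a ^ 2) := hmax ▸ cos_arccos hlow.le (by linarith)
  have hsin : 0 < sin φmax :=
    hmax ▸ sin_pos_of_pos_of_lt_pi (arccos_pos.2 (by linarith)) (arccos_lt_pi.2 hlow)
  have hpos : 0 < Φ φmax := by
    rw [hΦ, neg_sin_sub_mul_sin_two_mul_eq, hcos]
    exact mul_pos_of_neg_of_neg (neg_neg_of_pos hsin) (one_add_mul_criticalCos_neg ha)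
  refine ⟨hpos, ?_⟩
  rw [hΦ] at hpos ⊢
  rw [neg_sin_sub_mul_sin_two_mul_two_pi_sub]
  linarith
end

section
/- Let μ > 0, M ≥ 0, P = (1 + a²/4 + M)/μ, and let (φ, p) be a T-periodic solution (T > 0) of φ' = p, p' = -sin φ - μ p - (a²/4) sin 2φ + F(t) cos φ, where |F(t)| ≤ M for all t. Then |p(t)| ≤ P for all t. -/
open Real

theorem periodic_solution_momentum_bound (a μ M : ℝ) (hμ : 0 < μ) (hM : 0 ≤ M)
    (P : ℝ) (hP : P = (1 + a^2/4 + M) / μ)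
    (F : ℝ → ℝ) (hFc : Continuous F) (hFb : ∀ t, |F t| ≤ M)
    (φ p : ℝ → ℝ)
    (hφ : ∀ t, HasDerivAt φ (p t) t)
    (hp : ∀ t, HasDerivAt p
      (-Real.sin (φ t) - μ * p t - (a^2/4) * Real.sin (2*φ t) + F t * Real.cos (φ t)) t)
    (hpc : Continuous p)
    (T : ℝ) (hT : 0 < T)
    (hper : ∀ t, φ (t + T) = φ t ∧ p (t + T) = p t) :
    ∀ t, |p t| ≤ P := by
  have hper' : Function.Periodic p T := fun t => (hper t).2
  -- at any point where the derivative of p is zero, |p| ≤ P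
  have bound : ∀ t,
      -Real.sin (φ t) - μ * p t - (a^2/4) * Real.sin (2*φ t) + F t * Real.cos (φ t) = 0 →
      |p t| ≤ P := by
    intro t h
    have hfc : |F t * Real.cos (φ t)| ≤ M := by
      rw [abs_mul]
      calc |F t| * |Real.cos (φ t)| ≤ M * 1 :=
            mul_le_mul (hFb t) (Real.abs_cos_le_one _) (abs_nonneg _) hM
        _ = M := mul_one M
    have has : |(a^2/4) * Real.sin (2*φ t)| ≤ a^2/4 := by
      rw [abs_mul, abs_of_nonneg (by positivity : (0:ℝ) ≤ a^2/4)]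
      calc a^2/4 * |Real.sin (2*φ t)| ≤ a^2/4 * 1 :=
            mul_le_mul_of_nonneg_left (Real.abs_sin_le_one _) (by positivity)
        _ = a^2/4 := mul_one _
    have hs : |Real.sin (φ t)| ≤ 1 := Real.abs_sin_le_one _
    obtain ⟨h1, h2⟩ := abs_le.mp hfc
    obtain ⟨h3, h4⟩ := abs_le.mp has
    obtain ⟨h5, h6⟩ := abs_le.mp hs
    have h7 : |μ * p t| ≤ 1 + a^2/4 + M := by
      rw [abs_le]
      constructor <;> linarith
    rw [abs_mul, abs_of_pos hμ] at h7
    rw [hP, le_div_iff₀ hμ]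
    linarith
  obtain ⟨t₀, ht₀m, ht₀⟩ := isCompact_Icc.exists_isMaxOn (Set.nonempty_Icc.mpr hT.le)
    (hpc.continuousOn (s := Set.Icc 0 T))
  obtain ⟨t₁, ht₁m, ht₁⟩ := isCompact_Icc.exists_isMinOn (Set.nonempty_Icc.mpr hT.le)
    (hpc.continuousOn (s := Set.Icc 0 T))
  have hmax : ∀ t, p t ≤ p t₀ := by
    intro t
    obtain ⟨s, hs, hsp⟩ := hper'.exists_mem_Ico₀ hT t
    rw [hsp]
    exact ht₀ (Set.Ico_subset_Icc_self hs)
  have hmin : ∀ t, p t₁ ≤ p t := by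
    intro t
    obtain ⟨s, hs, hsp⟩ := hper'.exists_mem_Ico₀ hT t
    rw [hsp]
    exact ht₁ (Set.Ico_subset_Icc_self hs)
  have hlmax : IsLocalMax p t₀ := by
    have : IsMaxOn p Set.univ t₀ := fun x _ => hmax x
    exact this.isLocalMax Filter.univ_mem
  have hlmin : IsLocalMin p t₁ := by
    have : IsMinOn p Set.univ t₁ := fun x _ => hmin x
    exact this.isLocalMin Filter.univ_mem
  have hb0 : |p t₀| ≤ P := bound t₀ (hlmax.hasDerivAt_eq_zero (hp t₀))
  have hb1 : |p t₁| ≤ P := bound t₁ (hlmin.hasDerivAt_eq_zero (hp t₁))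
  intro t
  rw [abs_le]
  obtain ⟨a0, b0⟩ := abs_le.mp hb0
  obtain ⟨a1, b1⟩ := abs_le.mp hb1
  exact ⟨le_trans a1 (hmin t), le_trans (hmax t) b0⟩
end
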